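/- arXiv:0909.5170 — 4 statements merged into one kernel-verified Lean document; each statement's English description precedes it below -/
import Mathlib

section
/- In the polynomial ring $S = k[x_0, \ldots, x_n]$ with $n \ge 2$ over a field $k$, the ideal $(x_0^2, x_0 x_1, x_1^2, x_0 x_2 - x_1 x_2)$ equals the intersection $(x_0 - x_1, x_0^2) \cap (x_0, x_1, x_2)^2$. -/
/-!
Write `a, b, c` for `x₀, x₁, x₂` and `P = (a, b, c)`. Both ideals contain `a²`, and
`(a - b) P ⊆ (a², ab, b², (a - b) c)`, so the equality reduces to `(P² : (a - b)) ⊆ P`.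
For this, substitute `b, c ↦ 0`: this sends `P` into `(a)`, so `g (a - b) ∈ P²` gives
`a · g(a, 0, 0, …) ∈ (a²)`, hence `g(a, 0, 0, …) ∈ (a) ⊆ P`, while
`g - g(a, 0, 0, …) ∈ (b, c) ⊆ P`.
-/

open MvPolynomial

theorem MvPolynomial.sub_aeval_mem {σ R : Type*} [CommRing R] {I : Ideal (MvPolynomial σ R)}
    {μ : σ → MvPolynomial σ R} (hμ : ∀ i, X i - μ i ∈ I) (p : MvPolynomial σ R) :
    p - aeval μ p ∈ I := by
  rw [← Ideal.Quotient.eq]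
  have : (Ideal.Quotient.mkₐ R I).comp (aeval μ) = Ideal.Quotient.mkₐ R I :=
    algHom_ext fun i => by simpa using (Ideal.Quotient.eq.mpr (hμ i)).symm
  exact (DFunLike.congr_fun this p).symm

section

variable {A : Type*} [CommRing A] (a b c : A)

theorem span_le_colon_span_sub :
    Ideal.span {a, b, c} ≤
      (Ideal.span {a ^ 2, a * b, b ^ 2, a * c - b * c} : Ideal A).colon {a - b} := by
  simp only [Ideal.span_le, Set.insert_subset_iff, Set.singleton_subset_iff, SetLike.mem_coe,
    Submodule.mem_colon_singleton, smul_eq_mul]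
  refine ⟨?_, ?_, ?_⟩
  · rw [show a * (a - b) = a ^ 2 - a * b by ring]
    exact sub_mem (Ideal.subset_span (by simp)) (Ideal.subset_span (by simp))
  · rw [show b * (a - b) = a * b - b ^ 2 by ring]
    exact sub_mem (Ideal.subset_span (by simp)) (Ideal.subset_span (by simp))
  · rw [show c * (a - b) = a * c - b * c by ring]
    exact Ideal.subset_span (by simp)

theorem span_le_span_pair_inf_sq :
    Ideal.span {a ^ 2, a * b, b ^ 2, a * c - b * c} ≤
      Ideal.span {a - b, a ^ 2} ⊓ Ideal.span {a, b, c} ^ 2 := by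
  have ha : a ∈ Ideal.span {a, b, c} := Ideal.subset_span (by simp)
  have hb : b ∈ Ideal.span {a, b, c} := Ideal.subset_span (by simp)
  have hc : c ∈ Ideal.span {a, b, c} := Ideal.subset_span (by simp)
  simp only [Ideal.span_le, Set.insert_subset_iff, Set.singleton_subset_iff, SetLike.mem_coe,
    Submodule.mem_inf, Ideal.mem_span_pair, sq (Ideal.span {a, b, c})]
  refine ⟨⟨⟨0, 1, by ring⟩, ?_⟩, ⟨⟨-a, 1, by ring⟩, ?_⟩, ⟨⟨-(a + b), 1, by ring⟩, ?_⟩,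
    ⟨c, 0, by ring⟩, ?_⟩
  · rw [sq]; exact Ideal.mul_mem_mul ha ha
  · exact Ideal.mul_mem_mul ha hb
  · rw [sq]; exact Ideal.mul_mem_mul hb hb
  · exact sub_mem (Ideal.mul_mem_mul ha hc) (Ideal.mul_mem_mul hb hc)

theorem span_eq_span_pair_inf_sq
    (h : (Ideal.span {a, b, c} ^ 2 : Ideal A).colon {a - b} ≤ Ideal.span {a, b, c}) :
    Ideal.span {a ^ 2, a * b, b ^ 2, a * c - b * c} =
      Ideal.span {a - b, a ^ 2} ⊓ Ideal.span {a, b, c} ^ 2 := by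
  refine le_antisymm (span_le_span_pair_inf_sq a b c) ?_
  rintro f ⟨hf, hf2⟩
  obtain ⟨g, r, rfl⟩ := Ideal.mem_span_pair.mp hf
  have hg : g ∈ (Ideal.span {a, b, c} ^ 2 : Ideal A).colon {a - b} := by
    rw [Submodule.mem_colon_singleton, smul_eq_mul,
      ← add_sub_cancel_right (g * (a - b)) (r * a ^ 2)]
    exact sub_mem hf2 (Ideal.mul_mem_left _ r (Ideal.pow_mem_pow (Ideal.subset_span (by simp)) 2))
  have hga := Submodule.mem_colon_singleton.mp (span_le_colon_span_sub a b c (h hg))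
  exact add_mem hga (Ideal.mul_mem_left _ r (Ideal.subset_span (by simp)))

end

theorem MvPolynomial.colon_span_X_sub_X_le {σ R : Type*} [CommRing R] {i j l : σ}
    (hij : i ≠ j) (hil : i ≠ l) :
    (Ideal.span {X i, X j, X l} ^ 2 : Ideal (MvPolynomial σ R)).colon {X i - X j} ≤
      Ideal.span {X i, X j, X l} := by
  classical
  set P : Ideal (MvPolynomial σ R) := Ideal.span {X i, X j, X l}
  set π : MvPolynomial σ R →ₐ[R] MvPolynomial σ R :=
    aeval fun m => if m = j ∨ m = l then 0 else X m
  have hπP : P ≤ Ideal.comap π (Ideal.span {X i}) := by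
    simp [P, π, Ideal.span_le, Set.insert_subset_iff, hij, hil]
  intro g hg
  rw [Submodule.mem_colon_singleton, smul_eq_mul] at hg
  have hπg : π g * X i ∈ Ideal.span {X i ^ 2} := by
    have := Ideal.le_comap_pow _ 2 (Ideal.pow_right_mono hπP 2 hg)
    simpa [π, hij, hil, Ideal.span_singleton_pow] using this
  obtain ⟨q, hq⟩ := Ideal.mem_span_singleton'.mp hπg
  have hπg_eq : π g = q * X i := by
    rw [← X_mul_cancel_right_iff (i := i), ← hq]; ring
  have hπgP : π g ∈ P := hπg_eq ▸ Ideal.mul_mem_left _ q (Ideal.subset_span (by simp))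
  have hgπ : g - π g ∈ P := by
    refine sub_aeval_mem (fun m => ?_) g
    by_cases hm : m = j ∨ m = l
    · simp only [hm, if_true, sub_zero]
      rcases hm with rfl | rfl <;> exact Ideal.subset_span (by simp)
    · simp [hm]
  simpa using add_mem hgπ hπgP

/-- in `S = k[x₀,…,xₙ]` with `n ≥ 2`, the ideal
`(x₀², x₀x₁, x₁², x₀x₂ - x₁x₂)` equals `(x₀ - x₁, x₀²) ∩ (x₀, x₁, x₂)²`. -/
theorem stmt_4 (k : Type*) [Field k] (n : ℕ) (hn : 2 ≤ n) :
    (Ideal.span {X (⟨0, by omega⟩ : Fin (n + 1)) ^ 2,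
        X (⟨0, by omega⟩ : Fin (n + 1)) * X ⟨1, by omega⟩,
        X (⟨1, by omega⟩ : Fin (n + 1)) ^ 2,
        X (⟨0, by omega⟩ : Fin (n + 1)) * X ⟨2, by omega⟩
          - X (⟨1, by omega⟩ : Fin (n + 1)) * X ⟨2, by omega⟩} :
      Ideal (MvPolynomial (Fin (n + 1)) k))
      = Ideal.span {X ⟨0, by omega⟩ - X ⟨1, by omega⟩, X (⟨0, by omega⟩ : Fin (n + 1)) ^ 2}
          ⊓ (Ideal.span {X ⟨0, by omega⟩, X ⟨1, by omega⟩, X ⟨2, by omega⟩}) ^ 2 :=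
  span_eq_span_pair_inf_sq _ _ _ <|
    colon_span_X_sub_X_le (by simp [Fin.ext_iff]) (by simp [Fin.ext_iff])
end

section
/- Let $k$ be a field and let $F, G$ be nonzero relatively prime homogeneous polynomials of the same degree in $k[x_2, \ldots, x_n]$. Suppose $B_0, B_1$ are homogeneous polynomials in $k[x_2, \ldots, x_n]$ of the same degree such that the polynomial $x_0 B_0 - x_1 B_1 \in k[x_0, \ldots, x_n]$ is divisible by $x_0 G - x_1 F$. Then there exists a homogeneous polynomial $C \in k[x_2, \ldots, x_n]$ with $B_0 = C G$ and $B_1 = C F$. -/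
open MvPolynomial
open Finset

lemma aux_hom_quot {σ A : Type*} [CommRing A] [IsDomain A]
    {p q : MvPolynomial σ A} {m d : ℕ}
    (hq : q.IsHomogeneous d) (hq0 : q ≠ 0) (hpq : (p * q).IsHomogeneous m)
    (hp0 : p ≠ 0) : ∃ e, e + d = m ∧ p.IsHomogeneous e := by
  have key : ∀ i, i + d ≠ m → homogeneousComponent i p = 0 := by
    intro i hi
    by_cases hit : i ≤ p.totalDegree
    · have h2 : homogeneousComponent i p * q = homogeneousComponent (i + d) (p * q) := by
        have hpq_eq : p * q = ∑ j ∈ range (p.totalDegree + 1), homogeneousComponent j p * q := by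
          rw [← Finset.sum_mul, sum_homogeneousComponent]
        rw [hpq_eq, map_sum]
        rw [Finset.sum_eq_single i]
        · rw [homogeneousComponent_of_mem
            ((homogeneousComponent_isHomogeneous i p).mul hq), if_pos rfl]
        · intro j _ hji
          rw [homogeneousComponent_of_mem
            ((homogeneousComponent_isHomogeneous j p).mul hq), if_neg (by omega)]
        · intro h
          exact absurd (mem_range.mpr (by omega)) h
      have h3 : homogeneousComponent (i + d) (p * q) = 0 := by
        rw [homogeneousComponent_of_mem hpq, if_neg hi]
      rcases mul_eq_zero.mp (h2.trans h3) with h | h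
      · exact h
      · exact absurd h hq0
    · exact homogeneousComponent_eq_zero _ p (by omega)
  have hex : ∃ i, homogeneousComponent i p ≠ 0 := by
    by_contra h
    push_neg at h
    exact hp0 ((sum_homogeneousComponent p).symm.trans (Finset.sum_eq_zero fun i _ => h i))
  obtain ⟨i, hi⟩ := hex
  have him : i + d = m := by
    by_contra h
    exact hi (key i h)
  refine ⟨i, him, ?_⟩
  have hsum : p = ∑ j ∈ range (p.totalDegree + 1), homogeneousComponent j p :=
    (sum_homogeneousComponent p).symm
  rw [hsum]
  apply IsHomogeneous.sum
  intro j _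
  rcases eq_or_ne j i with rfl | hji
  · exact homogeneousComponent_isHomogeneous j p
  · rw [key j (by omega)]
    exact isHomogeneous_zero _ _ _

lemma aux_eq_C {σ A : Type*} [CommRing A] {p : MvPolynomial σ A}
    (h : p.IsHomogeneous 0) : p = C (coeff 0 p) := by
  classical
  ext d
  rcases eq_or_ne d 0 with rfl | hd
  · simp
  · rw [coeff_C, if_neg (Ne.symm hd), h.coeff_eq_zero]
    simpa [Finsupp.degree_eq_zero_iff] using hd

lemma aux_coeff0 {A : Type*} [CommRing A] (a b : A) :
    coeff (Finsupp.single (0:Fin 2) 1) (X 0 * C a - X 1 * C b : MvPolynomial (Fin 2) A) = a := by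
  rw [mul_comm (X 0), mul_comm (X 1)]
  simp [coeff_C_mul, coeff_X', Finsupp.single_eq_single_iff]

lemma aux_coeff1 {A : Type*} [CommRing A] (a b : A) :
    coeff (Finsupp.single (1:Fin 2) 1) (X 0 * C a - X 1 * C b : MvPolynomial (Fin 2) A) = -b := by
  rw [mul_comm (X 0), mul_comm (X 1)]
  simp [coeff_C_mul, coeff_X', Finsupp.single_eq_single_iff]

lemma aux_pair_eq {A : Type*} [CommRing A] {a b a' b' : A}
    (h : (X 0 * C a - X 1 * C b : MvPolynomial (Fin 2) A) = X 0 * C a' - X 1 * C b') :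
    a = a' ∧ b = b' := by
  constructor
  · have := congrArg (coeff (Finsupp.single (0:Fin 2) 1)) h
    rwa [aux_coeff0, aux_coeff0] at this
  · have := congrArg (coeff (Finsupp.single (1:Fin 2) 1)) h
    rw [aux_coeff1, aux_coeff1] at this
    exact neg_injective this

/-- if `F, G` are nonzero relatively prime homogeneous polynomials of the
same degree in `k[x₂,…,xₙ]`, and `B₀, B₁` are homogeneous of the same degree in
`k[x₂,…,xₙ]` with `x₀G - x₁F ∣ x₀B₀ - x₁B₁` in `k[x₀,…,xₙ]`, then `B₀ = CG` and
`B₁ = CF` for some homogeneous `C ∈ k[x₂,…,xₙ]`.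
Here `k[x₂,…,xₙ]` is modelled as `R = MvPolynomial (Fin (n-1)) k` and
`k[x₀,…,xₙ] = R[x₀,x₁]` as `MvPolynomial (Fin 2) R`. -/
theorem stmt_5 (k : Type*) [Field k] (n : ℕ) (hn : 2 ≤ n)
    (F G B0 B1 : MvPolynomial (Fin (n - 1)) k) (dF dB : ℕ)
    (hFhom : F.IsHomogeneous dF) (hGhom : G.IsHomogeneous dF)
    (hF0 : F ≠ 0) (hG0 : G ≠ 0) (hcop : IsRelPrime F G)
    (hB0hom : B0.IsHomogeneous dB) (hB1hom : B1.IsHomogeneous dB)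
    (hdvd : (X 0 * C G - X 1 * C F : MvPolynomial (Fin 2) (MvPolynomial (Fin (n - 1)) k))
      ∣ X 0 * C B0 - X 1 * C B1) :
    ∃ (Cp : MvPolynomial (Fin (n - 1)) k) (e : ℕ),
      Cp.IsHomogeneous e ∧ B0 = Cp * G ∧ B1 = Cp * F := by
  obtain ⟨Q, hQ⟩ := hdvd
  have hD0 : (X 0 * C G - X 1 * C F : MvPolynomial (Fin 2) (MvPolynomial (Fin (n - 1)) k)) ≠ 0 := by
    intro h
    have : (X 0 * C G - X 1 * C F : MvPolynomial (Fin 2) (MvPolynomial (Fin (n - 1)) k))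
        = X 0 * C 0 - X 1 * C 0 := by rw [h]; simp
    exact hG0 (aux_pair_eq this).1
  by_cases hR0 : (X 0 * C B0 - X 1 * C B1 : MvPolynomial (Fin 2) (MvPolynomial (Fin (n - 1)) k)) = 0
  · have : (X 0 * C B0 - X 1 * C B1 : MvPolynomial (Fin 2) (MvPolynomial (Fin (n - 1)) k))
        = X 0 * C 0 - X 1 * C 0 := by rw [hR0]; simp
    obtain ⟨hb0, hb1⟩ := aux_pair_eq this
    exact ⟨0, 0, isHomogeneous_zero _ _ _, by simp [hb0], by simp [hb1]⟩
  · have hQ0 : Q ≠ 0 := by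
      rintro rfl
      simp [hQ] at hR0
    have hDhom : (X 0 * C G - X 1 * C F :
        MvPolynomial (Fin 2) (MvPolynomial (Fin (n - 1)) k)).IsHomogeneous 1 := by
      apply IsHomogeneous.sub
      · simpa using (isHomogeneous_X _ (0 : Fin 2)).mul (isHomogeneous_C _ G)
      · simpa using (isHomogeneous_X _ (1 : Fin 2)).mul (isHomogeneous_C _ F)
    have hRhom : (Q * (X 0 * C G - X 1 * C F :
        MvPolynomial (Fin 2) (MvPolynomial (Fin (n - 1)) k))).IsHomogeneous 1 := by
      rw [mul_comm, ← hQ]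
      apply IsHomogeneous.sub
      · simpa using (isHomogeneous_X _ (0 : Fin 2)).mul (isHomogeneous_C _ B0)
      · simpa using (isHomogeneous_X _ (1 : Fin 2)).mul (isHomogeneous_C _ B1)
    obtain ⟨e, he, hQhom⟩ := aux_hom_quot hDhom hD0 hRhom hQ0
    have he0 : e = 0 := by omega
    subst he0
    have hQC : Q = C (coeff 0 Q) := aux_eq_C hQhom
    set c := coeff 0 Q with hc
    rw [hQC] at hQ
    have hexp : ((X 0 * C G - X 1 * C F :
        MvPolynomial (Fin 2) (MvPolynomial (Fin (n - 1)) k))) * C c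
        = X 0 * C (G * c) - X 1 * C (F * c) := by
      rw [sub_mul, mul_assoc, mul_assoc, ← C_mul, ← C_mul]
    rw [hexp] at hQ
    obtain ⟨hB0, hB1⟩ := aux_pair_eq hQ
    rcases eq_or_ne c 0 with hceq | hc0
    · exact ⟨0, 0, isHomogeneous_zero _ _ _, by simp [hB0, hceq], by simp [hB1, hceq]⟩
    · have hchom : ∃ e', (c : MvPolynomial (Fin (n - 1)) k).IsHomogeneous e' := by
        have hprod : ((c * G : MvPolynomial (Fin (n - 1)) k)).IsHomogeneous dB := by
          rw [mul_comm, ← hB0]; exact hB0hom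
        obtain ⟨e', _, h⟩ := aux_hom_quot hGhom hG0 hprod hc0
        exact ⟨e', h⟩
      obtain ⟨e', hchom⟩ := hchom
      exact ⟨c, e', hchom, by rw [hB0, mul_comm], by rw [hB1, mul_comm]⟩
end

section
/- Let $k$ be a field, $n \ge 3$, $S = k[x_0, \ldots, x_n]$, and let $F, G$ be relatively prime homogeneous polynomials of degree $d \ge 1$ in $k[x_2, \ldots, x_n]$. Let $I = (x_0^2, x_0 x_1, x_1^2, x_0 G - x_1 F)$. Then for all sufficiently large $m$, $\dim_k (S/I)_m = \binom{n-2+m}{m} + 2\binom{n-3+m}{m-1} - \binom{n-3+m-d}{m-1-d}$. In particular, this equals $P_n(m) = 2\binom{n-2+m}{m} - \binom{n-4+m}{m}$ for all large $m$ if and only if $d = 1$. -/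
/-!
Write `x^u` for monomials and `J = (x₀, x₁)²`, the span of the monomials with `u₀ + u₁ ≥ 2`.
Every monomial of `g = x₀G - x₁F` has `u₀ + u₁ = 1`, so splitting a multiplier of `g` into its
part in `k[x₂,…,xₙ]` and its part in `(x₀, x₁)` gives `I = J ⊕ g·k[x₂,…,xₙ]` as vector spaces,
the sum being direct because `g·k[x₂,…,xₙ]` only involves monomials with `u₀ + u₁ = 1` and
multiplication by `g ≠ 0` is injective. Taking degree-`m` parts,
`dim I_m = dim J_m + dim k[x₂,…,xₙ]_{m-1-d}`, while the degree-`m` monomials outside `J` are those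
of `k[x₂,…,xₙ]_m`, `x₀·k[x₂,…,xₙ]_{m-1}` and `x₁·k[x₂,…,xₙ]_{m-1}`. Comparing with `Pₙ` by
Pascal's rule leaves `C(n-3+m-d, m-1-d) = C(n-4+m, m-2)`, and as `C(n-4+j, j)` is strictly
increasing in `j` this holds exactly when `d = 1`.
-/

open MvPolynomial Module

theorem Submodule.finrank_map_add_finrank_ker_inf {K V W : Type*} [DivisionRing K]
    [AddCommGroup V] [Module K V] [AddCommGroup W] [Module K W] (f : V →ₗ[K] W)
    (p : Submodule K V) [FiniteDimensional K p] :
    finrank K (p.map f) + finrank K (LinearMap.ker f ⊓ p : Submodule K V) = finrank K p := by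
  have h := LinearMap.finrank_range_add_finrank_ker (f.domRestrict p)
  have hker : (LinearMap.ker f).comap p.subtype = (LinearMap.ker f ⊓ p).comap p.subtype := by
    rw [Submodule.comap_inf, Submodule.comap_subtype_self, inf_top_eq]
  rwa [LinearMap.range_domRestrict, LinearMap.ker_domRestrict, hker,
    (Submodule.comapSubtypeEquivOfLe inf_le_right).finrank_eq] at h

namespace MvPolynomial

variable {R σ : Type*}

section CommSemiring

variable [CommSemiring R]

theorem restrictSupport_union (s t : Set (σ →₀ ℕ)) :
    restrictSupport R (s ∪ t) = restrictSupport R s ⊔ restrictSupport R t := by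
  simp only [restrictSupport, AddMonoidAlgebra.supported, Finsupp.supported_union,
    Submodule.comap_equiv_eq_map_symm, Submodule.map_sup]

theorem disjoint_restrictSupport {s t : Set (σ →₀ ℕ)} (h : Disjoint s t) :
    Disjoint (restrictSupport R s) (restrictSupport R t) := by
  refine Submodule.disjoint_def.mpr fun p hs ht => ?_
  rw [← support_eq_empty, ← Finset.coe_eq_empty, ← Set.subset_empty_iff, ← h.inter_eq]
  exact Set.subset_inter hs ht

open scoped Pointwise in
theorem mul_mem_restrictSupport {s t r : Set (σ →₀ ℕ)} (hst : ∀ u ∈ s, ∀ v ∈ t, u + v ∈ r)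
    {p q : MvPolynomial σ R} (hp : p ∈ restrictSupport R s) (hq : q ∈ restrictSupport R t) :
    p * q ∈ restrictSupport R r :=
  restrictSupport_mono R (Set.add_subset_iff.mpr hst)
    (restrictSupport_add R s t ▸ Submodule.mul_mem_mul hp hq)

theorem restrictSupport_degree_inter_le (m : ℕ) (s : Set (σ →₀ ℕ)) :
    restrictSupport R ({u | u.degree = m} ∩ s) ≤ homogeneousSubmodule σ R m := by
  rw [homogeneousSubmodule_eq_finsupp_supported]
  exact restrictSupport_mono R Set.inter_subset_left

theorem homogeneousComponent_mem_restrictSupport {s : Set (σ →₀ ℕ)} {p : MvPolynomial σ R}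
    (hp : p ∈ restrictSupport R s) (m : ℕ) :
    homogeneousComponent m p ∈ restrictSupport R ({u | u.degree = m} ∩ s) := by
  classical
  rw [mem_restrictSupport_iff]
  intro u hu
  rw [Finset.mem_coe, support_homogeneousComponent, Finset.mem_filter] at hu
  exact ⟨hu.2, hp hu.1⟩

theorem homogeneousComponent_mul_of_isHomogeneous {q : MvPolynomial σ R} {e m : ℕ}
    (hq : q.IsHomogeneous e) (hem : e ≤ m) (p : MvPolynomial σ R) :
    homogeneousComponent m (p * q) = homogeneousComponent (m - e) p * q := by
  induction p using MvPolynomial.induction_on' with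
  | monomial u r =>
    have hu := isHomogeneous_monomial r (rfl : u.degree = u.degree)
    rw [homogeneousComponent_of_mem (hu.mul hq), homogeneousComponent_of_mem hu]
    by_cases h : m = u.degree + e
    · rw [if_pos h, if_pos (by omega)]
    · rw [if_neg h, if_neg (by omega), zero_mul]
  | add p₁ p₂ ih₁ ih₂ => rw [add_mul, map_add, map_add, ih₁, ih₂, add_mul]

theorem mem_restrictSupport_of_notMem_vars {a b : σ} {F : MvPolynomial σ R} (ha : a ∉ F.vars)
    (hb : b ∉ F.vars) : F ∈ restrictSupport R {u | u a + u b = 0} := by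
  intro u hu
  have (i : σ) (hi : i ∉ F.vars) : u i = 0 :=
    by_contra fun h => hi ((mem_vars_iff_mem_support i).mpr ⟨u, hu, Finsupp.mem_support_iff.mpr h⟩)
  simp [this a ha, this b hb]

theorem ne_zero_of_isRelPrime_of_isHomogeneous [Nontrivial R] {F G : MvPolynomial σ R} {d : ℕ}
    (hd : d ≠ 0) (hF : F.IsHomogeneous d) (h : IsRelPrime F G) : G ≠ 0 := by
  rintro rfl
  have hunit := (isRelPrime_zero_right.mp h).map constantCoeff
  rw [constantCoeff_eq, hF.coeff_eq_zero (by simpa using hd.symm)] at hunit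
  exact not_isUnit_zero hunit

end CommSemiring

section Field

variable {k : Type*} [Field k]

theorem finiteDimensional_restrictSupport {s : Set (σ →₀ ℕ)} (hs : s.Finite) :
    FiniteDimensional k (restrictSupport k s) :=
  have := hs.to_subtype
  .of_basis (basisRestrictSupport k s)

theorem finrank_restrictSupport {s : Set (σ →₀ ℕ)} (hs : s.Finite) :
    finrank k (restrictSupport k s) = s.ncard := by
  have := hs.to_subtype
  rw [finrank_eq_nat_card_basis (basisRestrictSupport k s), Nat.card_coe_set_eq]

theorem finrank_restrictSupport_sup_map_mulLeft {s t : Set (σ →₀ ℕ)} (hs : s.Finite)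
    (ht : t.Finite) {g : MvPolynomial σ k} (hg : g ≠ 0)
    (hdisj : Disjoint (restrictSupport k s) ((restrictSupport k t).map (LinearMap.mulLeft k g))) :
    finrank k ↥(restrictSupport k s ⊔ (restrictSupport k t).map (LinearMap.mulLeft k g))
      = s.ncard + t.ncard := by
  have := finiteDimensional_restrictSupport (k := k) hs
  have := finiteDimensional_restrictSupport (k := k) ht
  have h := Submodule.finrank_sup_add_finrank_inf_eq (restrictSupport k s)
    ((restrictSupport k t).map (LinearMap.mulLeft k g))
  rwa [hdisj.eq_bot, finrank_bot, add_zero,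
    ← (Submodule.equivMapOfInjective _ (mul_right_injective₀ hg) _).finrank_eq,
    finrank_restrictSupport hs, finrank_restrictSupport ht] at h

end Field

section Counting

theorem ncard_degree_eq_support_subset (s : Finset σ) (t : ℕ) :
    {u : σ →₀ ℕ | u.degree = t ∧ u.support ⊆ s}.ncard = s.card.multichoose t := by
  classical
  have hset : {u : σ →₀ ℕ | u.degree = t ∧ u.support ⊆ s} = ↑(s.finsuppAntidiag t) := by
    ext u
    rw [Finset.mem_coe, Finset.mem_finsuppAntidiag']
    rfl
  rw [hset, Set.ncard_coe_finset, Finset.card_finsuppAntidiag_nat_eq_multichoose]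

theorem finrank_homogeneousSubmodule [Fintype σ] (k : Type*) [Field k] (m : ℕ) :
    finrank k (homogeneousSubmodule σ k m) = (Fintype.card σ).multichoose m := by
  classical
  rw [homogeneousSubmodule_eq_finsupp_supported, ← restrictSupport,
    finrank_restrictSupport (Finsupp.finite_of_degree_eq m), ← Finset.card_univ,
    ← ncard_degree_eq_support_subset]
  simp

variable [Fintype σ] {a b : σ}

theorem ncard_degree_eq_apply_add_apply_eq_zero (hab : a ≠ b) (t : ℕ) :
    ({u : σ →₀ ℕ | u.degree = t} ∩ {u | u a + u b = 0}).ncard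
      = (Fintype.card σ - 2).multichoose t := by
  classical
  have hcard : (Finset.univ \ {a, b}).card = Fintype.card σ - 2 := by
    rw [Finset.card_sdiff_of_subset (Finset.subset_univ _), Finset.card_pair hab, Finset.card_univ]
  rw [← hcard, ← ncard_degree_eq_support_subset]
  congr 1
  ext u
  refine and_congr_right fun _ => ?_
  simp only [Finset.subset_iff, Finsupp.mem_support_iff, Finset.mem_sdiff, Finset.mem_univ,
    true_and, Finset.mem_insert, Finset.mem_singleton, Nat.add_eq_zero_iff]
  exact ⟨fun ⟨ha, hb⟩ x hx => by rintro (rfl | rfl) <;> contradiction,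
    fun h => ⟨not_not.mp fun ha => h ha (.inl rfl), not_not.mp fun hb => h hb (.inr rfl)⟩⟩

theorem ncard_degree_eq_succ_apply_eq_one (hab : a ≠ b) (t : ℕ) :
    {u : σ →₀ ℕ | u.degree = t + 1 ∧ u a = 1 ∧ u b = 0}.ncard
      = (Fintype.card σ - 2).multichoose t := by
  rw [← ncard_degree_eq_apply_add_apply_eq_zero hab t]
  symm
  refine Set.ncard_congr (fun u _ => u + Finsupp.single a 1) ?_ ?_ ?_
  · rintro u ⟨hu : u.degree = t, hu0 : u a + u b = 0⟩
    refine ⟨by simp [hu], ?_, ?_⟩ <;> simp [hab] <;> omega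
  · intro u v _ _ h
    exact add_right_cancel h
  · rintro v ⟨hv, hva, hvb⟩
    have hle : Finsupp.single a 1 ≤ v := Finsupp.single_le_iff.mpr hva.ge
    have hdeg := congrArg Finsupp.degree (tsub_add_cancel_of_le hle)
    rw [map_add, Finsupp.degree_single] at hdeg
    refine ⟨v - Finsupp.single a 1, ⟨?_, ?_⟩, tsub_add_cancel_of_le hle⟩
    · change Finsupp.degree _ = t
      omega
    · simp [hva, hvb, hab]

theorem ncard_degree_eq_succ_diff (hab : a ≠ b) (t : ℕ) :
    ({u : σ →₀ ℕ | u.degree = t + 1} \ {u | 2 ≤ u a + u b}).ncard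
      = (Fintype.card σ - 2).multichoose (t + 1) + 2 * (Fintype.card σ - 2).multichoose t := by
  have hsplit : {u : σ →₀ ℕ | u.degree = t + 1} \ {u | 2 ≤ u a + u b}
      = {u | u.degree = t + 1} ∩ {u | u a + u b = 0} ∪ ({u | u.degree = t + 1 ∧ u a = 1 ∧ u b = 0}
        ∪ {u | u.degree = t + 1 ∧ u b = 1 ∧ u a = 0}) := by
    ext u
    simp only [Set.mem_sdiff, Set.mem_union, Set.mem_inter_iff, Set.mem_ofPred_eq]
    omega
  have hfin {s : Set (σ →₀ ℕ)} (hs : ∀ u ∈ s, u.degree = t + 1) : s.Finite :=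
    (Finsupp.finite_of_degree_eq _).subset hs
  have hfin₀ := hfin (s := {u | u.degree = t + 1} ∩ {u | u a + u b = 0}) fun _ hu => hu.1
  have hfinₐ := hfin (s := {u | u.degree = t + 1 ∧ u a = 1 ∧ u b = 0}) fun _ hu => hu.1
  have hfin_b := hfin (s := {u | u.degree = t + 1 ∧ u b = 1 ∧ u a = 0}) fun _ hu => hu.1
  rw [hsplit, Set.ncard_union_eq _ hfin₀ (hfinₐ.union hfin_b), Set.ncard_union_eq _ hfinₐ hfin_b,
    ncard_degree_eq_apply_add_apply_eq_zero hab,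
    ncard_degree_eq_succ_apply_eq_one hab, ncard_degree_eq_succ_apply_eq_one hab.symm, two_mul]
  · exact Set.disjoint_left.mpr fun u h₁ h₂ => by simp only [Set.mem_ofPred_eq] at h₁ h₂; omega
  · exact Set.disjoint_left.mpr fun u h₁ h₂ => by
      simp only [Set.mem_union, Set.mem_inter_iff, Set.mem_ofPred_eq] at h₁ h₂; omega

end Counting

section DoubleStructure

variable [CommRing R] {a b : σ}

theorem exists_le_iff_two_le (hab : a ≠ b) (u : σ →₀ ℕ) :
    (∃ w ∈ ({Finsupp.single a 2, Finsupp.single a 1 + Finsupp.single b 1, Finsupp.single b 2} :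
      Set (σ →₀ ℕ)), w ≤ u) ↔ 2 ≤ u a + u b := by
  constructor
  · rintro ⟨w, hw, hwu⟩
    have ha := hwu a
    have hb := hwu b
    rcases hw with rfl | rfl | rfl <;> simp [hab, hab.symm] at ha hb <;> omega
  · intro h
    rcases (by omega : 2 ≤ u a ∨ 2 ≤ u b ∨ (1 ≤ u a ∧ 1 ≤ u b)) with h | h | ⟨ha, hb⟩
    · exact ⟨_, .inl rfl, Finsupp.single_le_iff.mpr h⟩
    · exact ⟨_, .inr (.inr rfl), Finsupp.single_le_iff.mpr h⟩
    · classical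
      refine ⟨_, .inr (.inl rfl), fun i => ?_⟩
      simp only [Finsupp.add_apply, Finsupp.single_apply]
      split_ifs <;> subst_vars <;> simp_all

theorem restrictScalars_span_X_sq (hab : a ≠ b) :
    (Ideal.span {X a ^ 2, X a * X b, X b ^ 2} : Ideal (MvPolynomial σ R)).restrictScalars R
      = restrictSupport R {u | 2 ≤ u a + u b} := by
  have hgen : ({X a ^ 2, X a * X b, X b ^ 2} : Set (MvPolynomial σ R)) = (monomial · 1) ''
      {Finsupp.single a 2, Finsupp.single a 1 + Finsupp.single b 1, Finsupp.single b 2} := by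
    rw [X_pow_eq_monomial, X_pow_eq_monomial, X, X, monomial_mul, one_mul]
    simp only [Set.image_insert_eq, Set.image_singleton]
  ext p
  rw [Submodule.restrictScalars_mem, hgen, mem_ideal_span_monomial_image, mem_restrictSupport_iff]
  exact forall₂_congr fun u _ => exists_le_iff_two_le hab u

theorem restrictScalars_span_eq_sup (hab : a ≠ b) {g : MvPolynomial σ R}
    (hg : g ∈ restrictSupport R {u | u a + u b = 1}) :
    (Ideal.span {X a ^ 2, X a * X b, X b ^ 2, g}).restrictScalars R =
      restrictSupport R {u | 2 ≤ u a + u b} ⊔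
        (restrictSupport R {u | u a + u b = 0}).map (LinearMap.mulLeft R g) := by
  have hspan : Ideal.span {X a ^ 2, X a * X b, X b ^ 2, g}
      = Ideal.span {X a ^ 2, X a * X b, X b ^ 2} ⊔ Ideal.span {g} := by
    rw [← Ideal.span_union]
    simp only [Set.insert_union, Set.singleton_union]
  rw [← restrictScalars_span_X_sq hab]
  refine le_antisymm (fun x hx => ?_) (sup_le ?_ ?_)
  · rw [Submodule.restrictScalars_mem, hspan, Submodule.mem_sup] at hx
    obtain ⟨y, hy, _, hz, rfl⟩ := hx
    obtain ⟨p, rfl⟩ := Ideal.mem_span_singleton'.mp hz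
    have hp : p ∈ restrictSupport R {u | u a + u b = 0} ⊔
        restrictSupport R {u | 1 ≤ u a + u b} := by
      rw [← restrictSupport_union]
      exact restrictSupport_mono R
        (fun u _ => by simp only [Set.mem_union, Set.mem_ofPred_eq]; omega)
        (restrictSupport_univ (R := R) ▸ Submodule.mem_top)
    obtain ⟨p₀, hp₀, p₁, hp₁, rfl⟩ := Submodule.mem_sup.mp hp
    rw [show y + (p₀ + p₁) * g = (y + p₁ * g) + g * p₀ by ring]
    refine Submodule.add_mem_sup (add_mem ?_ ?_) ⟨p₀, hp₀, rfl⟩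
    · exact hy
    · rw [restrictScalars_span_X_sq hab]
      exact mul_mem_restrictSupport (fun u hu v hv => by
        simp only [Set.mem_ofPred_eq, Finsupp.add_apply] at hu hv ⊢; omega) hp₁ hg
  · exact fun _ hx => hspan ▸ Ideal.mem_sup_left hx
  · rintro _ ⟨p, -, rfl⟩
    exact Ideal.mul_mem_right _ _ (Ideal.subset_span (by simp))

theorem sup_map_mulLeft_inf_homogeneousSubmodule {s t : Set (σ →₀ ℕ)} {g : MvPolynomial σ R}
    {e m : ℕ} (hg : g.IsHomogeneous e) (hem : e ≤ m) :
    (restrictSupport R s ⊔ (restrictSupport R t).map (LinearMap.mulLeft R g))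
        ⊓ homogeneousSubmodule σ R m =
      restrictSupport R ({u | u.degree = m} ∩ s) ⊔
        (restrictSupport R ({u | u.degree = m - e} ∩ t)).map (LinearMap.mulLeft R g) := by
  refine le_antisymm ?_ (sup_le (le_inf ?_ (restrictSupport_degree_inter_le m s)) ?_)
  · rintro x ⟨hx, hxm⟩
    obtain ⟨y, hy, _, ⟨z, hz, rfl⟩, rfl⟩ := Submodule.mem_sup.mp hx
    rw [← homogeneousComponent_eq_self hxm, map_add, LinearMap.mulLeft_apply, mul_comm,
      homogeneousComponent_mul_of_isHomogeneous hg hem, mul_comm]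
    exact Submodule.add_mem_sup (homogeneousComponent_mem_restrictSupport hy m)
      ⟨_, homogeneousComponent_mem_restrictSupport hz _, rfl⟩
  · exact le_sup_of_le_left (restrictSupport_mono R Set.inter_subset_right)
  · rintro _ ⟨z, hz, rfl⟩
    refine ⟨Submodule.mem_sup_right ⟨z, restrictSupport_mono R Set.inter_subset_right hz, rfl⟩, ?_⟩
    have hzm := restrictSupport_degree_inter_le (R := R) (m - e) t hz
    change g * z ∈ homogeneousSubmodule σ R m
    rw [mem_homogeneousSubmodule] at hzm ⊢
    simpa [Nat.add_sub_cancel' hem] using hg.mul hzm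

theorem disjoint_restrictSupport_map_mulLeft {g : MvPolynomial σ R}
    (hg : g ∈ restrictSupport R {u | u a + u b = 1}) :
    Disjoint (restrictSupport R {u | 2 ≤ u a + u b})
      ((restrictSupport R {u | u a + u b = 0}).map (LinearMap.mulLeft R g)) := by
  refine (disjoint_restrictSupport (t := {u | u a + u b = 1}) (Set.disjoint_left.mpr
    fun u h₁ h₂ => by simp only [Set.mem_ofPred_eq] at h₁ h₂; omega)).mono_right ?_
  rintro _ ⟨p, hp, rfl⟩
  exact mul_mem_restrictSupport (fun u hu v hv => by
    simp only [Set.mem_ofPred_eq, Finsupp.add_apply] at hu hv ⊢; omega) hg hp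

theorem X_mul_sub_X_mul_mem_restrictSupport (hab : a ≠ b) {F G : MvPolynomial σ R}
    (hF : F ∈ restrictSupport R {u | u a + u b = 0})
    (hG : G ∈ restrictSupport R {u | u a + u b = 0}) :
    X a * G - X b * F ∈ restrictSupport R {u | u a + u b = 1} := by
  have hXa : (X a : MvPolynomial σ R) ∈ restrictSupport R {u | u a + u b = 1} := by
    simp [X, hab]
  have hXb : (X b : MvPolynomial σ R) ∈ restrictSupport R {u | u a + u b = 1} := by
    simp [X, hab.symm]
  have hadd : ∀ u ∈ {u : σ →₀ ℕ | u a + u b = 1}, ∀ v ∈ {u : σ →₀ ℕ | u a + u b = 0},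
      u + v ∈ {u : σ →₀ ℕ | u a + u b = 1} := fun u hu v hv => by
    simp only [Set.mem_ofPred_eq, Finsupp.add_apply] at hu hv ⊢; omega
  exact sub_mem (mul_mem_restrictSupport hadd hXa hG) (mul_mem_restrictSupport hadd hXb hF)

theorem X_mul_sub_X_mul_ne_zero [Nontrivial R] (hab : a ≠ b) (F : MvPolynomial σ R)
    {G : MvPolynomial σ R} (hG : G ∈ restrictSupport R {u | u a + u b = 0}) (hG0 : G ≠ 0) :
    X a * G - X b * F ≠ 0 := by
  classical
  obtain ⟨u, hu⟩ := support_nonempty.mpr hG0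
  have hub : u b = 0 := by have := hG hu; simp only [Set.mem_ofPred_eq] at this; omega
  -- the coefficient of `X a * X ^ u` comes from `X a * G` alone
  refine ne_of_apply_ne (coeff (Finsupp.single a 1 + u)) ?_
  rw [coeff_sub, coeff_X_mul, coeff_X_mul', if_neg (by simp [hab.symm, hub]), sub_zero, coeff_zero]
  exact mem_support_iff.mp hu

end DoubleStructure

section Dimension

variable {k : Type*} [Field k] [Fintype σ] {a b : σ}

theorem finrank_map_mk_homogeneousSubmodule_add (hab : a ≠ b) {g : MvPolynomial σ k} {e m : ℕ}
    (hg : g ∈ restrictSupport k {u | u a + u b = 1}) (hg_hom : g.IsHomogeneous (e + 1))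
    (hg0 : g ≠ 0) (hm : e + 1 ≤ m) :
    finrank k ((homogeneousSubmodule σ k m).map
        (Ideal.Quotient.mkₐ k (Ideal.span {X a ^ 2, X a * X b, X b ^ 2, g})).toLinearMap)
      + (Fintype.card σ - 2).multichoose (m - (e + 1))
      = (Fintype.card σ - 2).multichoose m + 2 * (Fintype.card σ - 2).multichoose (m - 1) := by
  set I := Ideal.span {X a ^ 2, X a * X b, X b ^ 2, g}
  have hfin (t : ℕ) (s : Set (σ →₀ ℕ)) : ({u : σ →₀ ℕ | u.degree = t} ∩ s).Finite :=
    (Finsupp.finite_of_degree_eq t).subset Set.inter_subset_left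
  have hSm : homogeneousSubmodule σ k m = restrictSupport k {u | u.degree = m} :=
    homogeneousSubmodule_eq_finsupp_supported ..
  have : FiniteDimensional k (homogeneousSubmodule σ k m) :=
    hSm ▸ finiteDimensional_restrictSupport (Finsupp.finite_of_degree_eq m)
  have hdim : finrank k (homogeneousSubmodule σ k m) = ({u : σ →₀ ℕ | u.degree = m} ∩
      {u | 2 ≤ u a + u b}).ncard + ({u : σ →₀ ℕ | u.degree = m} \ {u | 2 ≤ u a + u b}).ncard := by
    rw [hSm, finrank_restrictSupport (Finsupp.finite_of_degree_eq m),
      Set.ncard_inter_add_ncard_sdiff_eq_ncard _ _ (Finsupp.finite_of_degree_eq m)]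
  have hker : LinearMap.ker (Ideal.Quotient.mkₐ k I).toLinearMap = I.restrictScalars k := by
    ext
    simp [Ideal.Quotient.eq_zero_iff_mem]
  have hrank := Submodule.finrank_map_add_finrank_ker_inf (Ideal.Quotient.mkₐ k I).toLinearMap
    (homogeneousSubmodule σ k m)
  rw [hker, restrictScalars_span_eq_sup hab hg, sup_map_mulLeft_inf_homogeneousSubmodule hg_hom hm,
    finrank_restrictSupport_sup_map_mulLeft (hfin _ _) (hfin _ _) hg0
      ((disjoint_restrictSupport_map_mulLeft hg).mono
        (restrictSupport_mono k Set.inter_subset_right)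
        (Submodule.map_mono (restrictSupport_mono k Set.inter_subset_right))),
    ncard_degree_eq_apply_add_apply_eq_zero hab, hdim] at hrank
  obtain ⟨t, rfl⟩ : ∃ t, m = t + 1 := ⟨m - 1, by omega⟩
  rw [ncard_degree_eq_succ_diff hab] at hrank
  rw [Nat.add_sub_cancel]
  omega

theorem finrank_map_mk_span_X_mul_sub_X_mul (hab : a ≠ b) {F G : MvPolynomial σ k} {d m : ℕ}
    (hFa : a ∉ F.vars) (hFb : b ∉ F.vars) (hGa : a ∉ G.vars) (hGb : b ∉ G.vars)
    (hF : F.IsHomogeneous d) (hG : G.IsHomogeneous d) (hG0 : G ≠ 0) (hm : d + 1 ≤ m) :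
    finrank k ((homogeneousSubmodule σ k m).map (Ideal.Quotient.mkₐ k
        (Ideal.span {X a ^ 2, X a * X b, X b ^ 2, X a * G - X b * F})).toLinearMap)
      + (Fintype.card σ - 2).multichoose (m - (d + 1))
      = (Fintype.card σ - 2).multichoose m + 2 * (Fintype.card σ - 2).multichoose (m - 1) := by
  have hF' := mem_restrictSupport_of_notMem_vars (R := k) hFa hFb
  have hG' := mem_restrictSupport_of_notMem_vars (R := k) hGa hGb
  refine finrank_map_mk_homogeneousSubmodule_add hab
    (X_mul_sub_X_mul_mem_restrictSupport hab hF' hG') ?_ (X_mul_sub_X_mul_ne_zero hab F hG' hG0) hm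
  rw [add_comm d]
  exact ((isHomogeneous_X k a).mul hG).sub ((isHomogeneous_X k b).mul hF)

end Dimension

end MvPolynomial

namespace Nat

theorem multichoose_strictMono {N : ℕ} (hN : 2 ≤ N) : StrictMono N.multichoose := by
  obtain ⟨M, rfl⟩ : ∃ M, N = M + 1 + 1 := ⟨N - 2, by omega⟩
  refine strictMono_nat_of_lt_succ fun j => ?_
  have hpos : 0 < (M + 1).multichoose (j + 1) := by
    rw [multichoose_eq]
    exact choose_pos (by omega)
  rw [multichoose_succ_succ (M + 1) j]
  omega

theorem multichoose_add_multichoose (M j : ℕ) :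
    (M + 2).multichoose (j + 2) + (M + 2).multichoose j
      = 2 * (M + 2).multichoose (j + 1) + M.multichoose (j + 2) := by
  have h₁ := multichoose_succ_succ (M + 1) (j + 1)
  have h₂ := multichoose_succ_succ (M + 1) j
  have h₃ := multichoose_succ_succ M (j + 1)
  simp only [add_assoc, reduceAdd] at h₁ h₂ h₃
  omega

end Nat

theorem eq_two_mul_multichoose_sub_iff {N d m f : ℕ} (hN : 2 ≤ N) (hd : 1 ≤ d) (hm : d + 1 ≤ m)
    (hf : f + N.multichoose (m - (d + 1)) = N.multichoose m + 2 * N.multichoose (m - 1)) :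
    f = 2 * N.multichoose m - (N - 2).multichoose m ↔ d = 1 := by
  obtain ⟨M, rfl⟩ : ∃ M, N = M + 2 := ⟨N - 2, by omega⟩
  obtain ⟨j, rfl⟩ : ∃ j, m = j + 2 := ⟨m - 2, by omega⟩
  have hpascal := Nat.multichoose_add_multichoose M j
  have hmono := (Nat.multichoose_strictMono hN).monotone (show j ≤ j + 2 by omega)
  rw [show j + 2 - 1 = j + 1 by omega] at hf
  rw [Nat.add_sub_cancel]
  constructor
  · intro h
    have := (Nat.multichoose_strictMono hN).injective (show (M + 2).multichoose (j + 2 - (d + 1))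
      = (M + 2).multichoose j by omega)
    omega
  · rintro rfl
    rw [show j + 2 - (1 + 1) = j by omega] at hf
    omega

theorem eq_choose_of_add_multichoose_eq {n d m f : ℕ} (hn : 3 ≤ n) (hm : d + 1 ≤ m)
    (hf : f + (n - 1).multichoose (m - (d + 1))
      = (n - 1).multichoose m + 2 * (n - 1).multichoose (m - 1)) :
    f = (n - 2 + m).choose m + 2 * (n - 3 + m).choose (m - 1)
      - (n - 3 + m - d).choose (m - 1 - d) := by
  rw [Nat.multichoose_eq, Nat.multichoose_eq, Nat.multichoose_eq,
    show n - 1 + m - 1 = n - 2 + m by omega, show n - 1 + (m - 1) - 1 = n - 3 + m by omega,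
    show n - 1 + (m - (d + 1)) - 1 = n - 3 + m - d by omega,
    show m - (d + 1) = m - 1 - d by omega] at hf
  omega

/-- `Pₙ(m)` is encoded as twice the dimension of the degree-`m` piece of a polynomial ring in
`n - 1` variables minus that of one in `n - 3` variables, which is also correct for `n = 3`. -/
theorem stmt_6 (k : Type*) [Field k] (n : ℕ) (hn : 3 ≤ n)
    (F G : MvPolynomial (Fin (n + 1)) k) (d : ℕ) (hd : 1 ≤ d)
    (hFvars : ∀ i ∈ F.vars, 2 ≤ (i : ℕ)) (hGvars : ∀ i ∈ G.vars, 2 ≤ (i : ℕ))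
    (hFhom : F.IsHomogeneous d) (hGhom : G.IsHomogeneous d)
    (hcop : IsRelPrime F G)
    (I : Ideal (MvPolynomial (Fin (n + 1)) k))
    (hI : I = Ideal.span {X (⟨0, by omega⟩ : Fin (n + 1)) ^ 2,
        X (⟨0, by omega⟩ : Fin (n + 1)) * X ⟨1, by omega⟩,
        X (⟨1, by omega⟩ : Fin (n + 1)) ^ 2,
        X (⟨0, by omega⟩ : Fin (n + 1)) * G - X (⟨1, by omega⟩ : Fin (n + 1)) * F}) :
    (∃ M : ℕ, ∀ m ≥ M,
      Module.finrank k
        ((homogeneousSubmodule (Fin (n + 1)) k m).map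
          (Ideal.Quotient.mkₐ k I).toLinearMap)
        = (n - 2 + m).choose m + 2 * (n - 3 + m).choose (m - 1)
            - (n - 3 + m - d).choose (m - 1 - d)) ∧
    ((∃ M : ℕ, ∀ m ≥ M,
      Module.finrank k
        ((homogeneousSubmodule (Fin (n + 1)) k m).map
          (Ideal.Quotient.mkₐ k I).toLinearMap)
        = 2 * Module.finrank k (homogeneousSubmodule (Fin (n - 1)) k m)
            - Module.finrank k (homogeneousSubmodule (Fin (n - 3)) k m)) ↔ d = 1) := by
  have hvars (H : MvPolynomial (Fin (n + 1)) k) (hH : ∀ i ∈ H.vars, 2 ≤ (i : ℕ))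
      (i : Fin (n + 1)) (hi : (i : ℕ) < 2) : i ∉ H.vars :=
    fun h => absurd (hH i h) (by omega)
  have key (m : ℕ) (hm : d + 1 ≤ m) : Module.finrank k
        ((homogeneousSubmodule (Fin (n + 1)) k m).map (Ideal.Quotient.mkₐ k I).toLinearMap)
      + (n - 1).multichoose (m - (d + 1))
      = (n - 1).multichoose m + 2 * (n - 1).multichoose (m - 1) := by
    have := finrank_map_mk_span_X_mul_sub_X_mul (a := ⟨0, by omega⟩) (b := ⟨1, by omega⟩)
      (Fin.ne_of_val_ne zero_ne_one) (hvars F hFvars _ zero_lt_two) (hvars F hFvars _ one_lt_two)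
      (hvars G hGvars _ zero_lt_two) (hvars G hGvars _ one_lt_two) hFhom hGhom
      (ne_zero_of_isRelPrime_of_isHomogeneous (by omega) hFhom hcop) hm
    rwa [Fintype.card_fin, show n + 1 - 2 = n - 1 by omega, ← hI] at this
  simp only [finrank_homogeneousSubmodule, Fintype.card_fin]
  refine ⟨⟨d + 1, fun m hm => eq_choose_of_add_multichoose_eq hn hm (key m hm)⟩,
    ⟨fun ⟨M, hM⟩ => ?_, ?_⟩⟩
  · have hm : d + 1 ≤ M + d + 1 := by omega
    exact (eq_two_mul_multichoose_sub_iff (by omega) hd hm (key _ hm)).mp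
      (by simpa [show n - 1 - 2 = n - 3 by omega] using hM _ (by omega))
  · rintro rfl
    refine ⟨2, fun m hm => ?_⟩
    simpa [show n - 1 - 2 = n - 3 by omega] using
      (eq_two_mul_multichoose_sub_iff (by omega) le_rfl hm (key m hm)).mpr rfl
end

section
/- Let $k$ be a field of characteristic zero, $n \ge 3$, $S = k[x_0, \ldots, x_n]$, and $I = (x_0^2, x_0 x_1, x_1^2, x_0 x_2)$. Then the degree-zero graded piece of $\mathrm{Hom}_S(I/I^2, S/I)$ has dimension $8n - 12$ over $k$. -/
/-!
A degree-zero homomorphism `φ : I → S/I` is determined by the classes `Hᵢ = φ(fᵢ)` of the images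
of the generators `f = (x², xy, y², xz)`, and these only have to respect the syzygies of `f`, which
are generated by the four linear ones `y f₀ = x f₁`, `y f₁ = x f₂`, `z f₀ = x f₃`, `z f₁ = y f₃`.
As `I` is a monomial ideal, these relations can be checked coefficientwise on the monomials outside
`I`; they force `H ≡ (x α₀, x α₁ + y β₀, x α₂ + y β₁ + z β₂, x α₃ + y β₃ + z β₀)` modulo `I`, with
linear forms `αᵢ` in the variables other than `x, y, z` and `βᵢ` in the variables other than
`x, y`, and conversely every such tuple comes from a homomorphism. Counting parameters gives
`4 (n - 2) + 4 (n - 1) = 8 n - 12`.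
-/

open MvPolynomial

/-- The degree-zero part of `Hom_S(I, S/I)` (which is identified with
`Hom_S(I/I², S/I)`, since any `S`-linear map `I → S/I` kills `I²`): the `k`-submodule of
`S`-linear maps `φ : I → S/I` sending every homogeneous element of `I` of degree `m` into
the degree-`m` graded piece of `S/I`. -/
def degreeZeroHoms (k : Type*) [Field k] (σ : Type*)
    (I : Ideal (MvPolynomial σ k)) :
    Submodule k ((↥I) →ₗ[MvPolynomial σ k] (MvPolynomial σ k ⧸ I)) where
  carrier := {φ | ∀ (m : ℕ) (p : MvPolynomial σ k) (hp : p ∈ I),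
      p ∈ homogeneousSubmodule σ k m →
      φ ⟨p, hp⟩ ∈ (homogeneousSubmodule σ k m).map (Ideal.Quotient.mkₐ k I).toLinearMap}
  add_mem' := by
    intro a b ha hb m p hp hhom
    simpa using add_mem (ha m p hp hhom) (hb m p hp hhom)
  zero_mem' := by
    intro m p hp hhom
    simp
  smul_mem' := by
    intro c a ha m p hp hhom
    simpa using Submodule.smul_mem _ c (ha m p hp hhom)

namespace Finsupp

variable {σ : Type*}

lemma exists_eq_single_of_degree_eq_one {N : σ →₀ ℕ} (hN : N.degree = 1) :
    ∃ j, N = single j 1 := by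
  classical
  obtain ⟨j, hj⟩ := Multiset.card_eq_one.1 (N.card_toMultiset.trans hN)
  exact ⟨j, by rw [← N.toMultiset_toFinsupp, hj, Multiset.toFinsupp_singleton]⟩

lemma exists_eq_single_add_single {N : σ →₀ ℕ} (hN : N.degree = 2) {c : σ} (hc : N c ≠ 0) :
    ∃ j, N = single c 1 + single j 1 := by
  have hle : single c 1 ≤ N := single_le_iff.2 (Nat.one_le_iff_ne_zero.2 hc)
  have hN' : (N - single c 1).degree = 1 := by
    have := map_add degree (single c 1) (N - single c 1)
    rw [add_tsub_cancel_of_le hle, degree_single] at this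
    omega
  obtain ⟨j, hj⟩ := exists_eq_single_of_degree_eq_one hN'
  exact ⟨j, by rw [← hj, add_tsub_cancel_of_le hle]⟩

lemma single_add_single_le_iff {a b : σ} (hab : a ≠ b) {N : σ →₀ ℕ} :
    single a 1 + single b 1 ≤ N ↔ 1 ≤ N a ∧ 1 ≤ N b := by
  classical
  simp only [le_def, add_apply, single_apply]
  refine ⟨fun h => ⟨by simpa [hab.symm] using h a, by simpa [hab] using h b⟩,
    fun ⟨ha, hb⟩ i => ?_⟩
  by_cases hia : a = i <;> by_cases hib : b = i <;> simp_all

end Finsupp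

namespace Ideal

variable {R M ι : Type*} [CommRing R] [AddCommGroup M] [Module R M]

lemma Quotient.smul_mk (I : Ideal R) (a b : R) : a • Quotient.mk I b = Quotient.mk I (a * b) :=
  rfl

def generator (f : ι → R) (i : ι) : span (Set.range f) :=
  ⟨f i, subset_span ⟨i, rfl⟩⟩

lemma sub_mem_of_mul_eq_mul {f : ι → R} (φ : span (Set.range f) →ₗ[R] R ⧸ span (Set.range f))
    {H : ι → R} (hH : ∀ i, φ (generator f i) = Quotient.mk _ (H i)) {s t : R} {i j : ι}
    (h : s * f i = t * f j) : s * H i - t * H j ∈ span (Set.range f) := by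
  have := congrArg φ (Subtype.ext h : s • generator f i = t • generator f j)
  rwa [map_smul, map_smul, hH, hH, Quotient.smul_mk, Quotient.smul_mk, Quotient.eq] at this

variable [Fintype ι]

lemma mk_sum_mul_eq_sum_smul_generator (f a : ι → R) (h : ∑ i, a i * f i ∈ span (Set.range f)) :
    (⟨∑ i, a i * f i, h⟩ : span (Set.range f)) = ∑ i, a i • generator f i :=
  Subtype.ext <| by simp [generator]

lemma span_range_hom_ext {f : ι → R} {φ ψ : span (Set.range f) →ₗ[R] M}
    (h : ∀ i, φ (generator f i) = ψ (generator f i)) : φ = ψ := by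
  ext ⟨g, hg⟩
  obtain ⟨a, rfl⟩ := mem_span_range_iff_exists_fun.1 hg
  simp only [mk_sum_mul_eq_sum_smul_generator, map_sum, map_smul, h]

noncomputable def liftOfSyzygies (f : ι → R) (H : ι → M)
    (hH : ∀ a : ι → R, ∑ i, a i * f i = 0 → ∑ i, a i • H i = 0) :
    span (Set.range f) →ₗ[R] M :=
  (LinearMap.ker (Fintype.linearCombination R f)).liftQ (Fintype.linearCombination R H)
      (fun a ha => by
        simpa [Fintype.linearCombination_apply] using
          hH a (by simpa [Fintype.linearCombination_apply] using ha)) ∘ₗ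
    (Fintype.linearCombination R f).quotKerEquivRange.symm.toLinearMap ∘ₗ
    (LinearEquiv.ofEq _ _ (Fintype.range_linearCombination R f).symm).toLinearMap

lemma liftOfSyzygies_generator [DecidableEq ι] (f : ι → R) (H : ι → M)
    (hH : ∀ a : ι → R, ∑ i, a i * f i = 0 → ∑ i, a i • H i = 0) (i : ι) :
    liftOfSyzygies f H hH (generator f i) = H i := by
  have : LinearEquiv.ofEq _ _ (Fintype.range_linearCombination R f).symm (generator f i) =
      ⟨Fintype.linearCombination R f (Pi.single i 1), LinearMap.mem_range_self _ _⟩ :=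
    Subtype.ext (by simp [generator])
  rw [liftOfSyzygies, LinearMap.comp_apply, LinearMap.comp_apply, LinearEquiv.coe_toLinearMap,
    LinearEquiv.coe_toLinearMap, this, LinearMap.quotKerEquivRange_symm_apply_image,
    Submodule.mkQ_apply, Submodule.liftQ_apply, Fintype.linearCombination_apply_single, one_smul]

end Ideal

namespace MvPolynomial

section CommSemiring

variable {σ R : Type*} [CommSemiring R]

lemma coeff_X_mul_of_apply_eq_zero {i : σ} {N : σ →₀ ℕ} (h : N i = 0) (p : MvPolynomial σ R) :
    coeff N (X i * p) = 0 := by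
  classical
  rw [coeff_X_mul', if_neg (by simpa using h)]

lemma coeff_single_add_single_X_mul [DecidableEq σ] (a b c : σ) (p : MvPolynomial σ R) :
    coeff (Finsupp.single a 1 + Finsupp.single b 1) (X c * p) =
      if c = a then coeff (Finsupp.single b 1) p
      else if c = b then coeff (Finsupp.single a 1) p else 0 := by
  split_ifs with ha hb
  · rw [ha, coeff_X_mul]
  · rw [hb, add_comm, coeff_X_mul]
  · exact coeff_X_mul_of_apply_eq_zero (by simp [Ne.symm ha, Ne.symm hb]) p

lemma IsHomogeneous.coeff_eq_zero_of_forall_eq_single_add_single {p : MvPolynomial σ R}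
    (hp : p.IsHomogeneous 2) {N : σ →₀ ℕ} {c : σ} (hc : N c ≠ 0)
    (h : ∀ j, N = Finsupp.single c 1 + Finsupp.single j 1 → coeff N p = 0) : coeff N p = 0 := by
  by_cases hN : N.degree = 2
  · obtain ⟨j, hj⟩ := Finsupp.exists_eq_single_add_single hN hc
    exact h j hj
  · exact hp.coeff_eq_zero hN

lemma mem_span_X_image_of_X_mul_mem {s : Set σ} {i : σ} (hi : i ∉ s) {p : MvPolynomial σ R}
    (h : X i * p ∈ Ideal.span (X '' s)) : p ∈ Ideal.span (X '' s) := by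
  classical
  rw [mem_ideal_span_X_image] at h ⊢
  intro N hN
  obtain ⟨j, hj, hNj⟩ := h (Finsupp.single i 1 + N) (by simpa [coeff_X_mul] using hN)
  have hij : i ≠ j := fun h => hi (h ▸ hj)
  exact ⟨j, hj, by simpa [Finsupp.single_apply, hij] using hNj⟩

noncomputable def linearForm {s : Finset σ} : (s → R) →ₗ[R] MvPolynomial σ R :=
  Fintype.linearCombination R fun j => X (j : σ)

lemma isHomogeneous_linearForm {s : Finset σ} (u : s → R) : (linearForm u).IsHomogeneous 1 :=
  (mem_homogeneousSubmodule 1 _).1 <| Submodule.sum_mem _ fun j _ =>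
    Submodule.smul_mem _ _ ((mem_homogeneousSubmodule 1 _).2 (isHomogeneous_X R (j : σ)))

lemma coeff_single_linearForm [DecidableEq σ] {s : Finset σ} (u : s → R) (j : σ) :
    coeff (Finsupp.single j 1) (linearForm u) = if h : j ∈ s then u ⟨j, h⟩ else 0 := by
  simp only [linearForm, Fintype.linearCombination_apply, coeff_sum, coeff_smul, coeff_X,
    Finsupp.single_left_inj one_ne_zero, smul_eq_mul, mul_ite, mul_one, mul_zero]
  split_ifs with h
  · rw [Finset.sum_eq_single ⟨j, h⟩ (fun i _ hi => if_neg fun h' => hi (Subtype.ext h'))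
      (by simp), if_pos rfl]
  · exact Finset.sum_eq_zero fun i _ => if_neg fun h' => h (by rw [← h']; exact i.2)

attribute [local instance] MvPolynomial.gradedAlgebra in
lemma homogeneousComponent_mul_of_isHomogeneous_s8 {f : MvPolynomial σ R} {d : ℕ}
    (hf : f.IsHomogeneous d) (a : MvPolynomial σ R) (m : ℕ) :
    homogeneousComponent m (a * f) = if d ≤ m then homogeneousComponent (m - d) a * f else 0 := by
  simp only [← decomposition.decompose'_apply]
  exact DirectSum.coe_decompose_mul_of_right_mem (homogeneousSubmodule σ R) m
    ((mem_homogeneousSubmodule d f).2 hf)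

end CommSemiring

lemma X_dvd_of_X_dvd_mul_X_pow {σ R : Type*} [CommRing R] [IsDomain R] {i j : σ} (hij : i ≠ j)
    {p : MvPolynomial σ R} {n : ℕ} (h : X i ∣ p * X j ^ n) : X i ∣ p :=
  (X_prime.dvd_or_dvd h).resolve_right fun h' => hij (X_dvd_X.1 (X_prime.dvd_of_dvd_pow h'))

end MvPolynomial

lemma mem_degreeZeroHoms_of_generator {k σ ι : Type*} [Field k] [Fintype ι]
    {f : ι → MvPolynomial σ k} {d : ι → ℕ} (hf : ∀ i, (f i).IsHomogeneous (d i))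
    {φ : Ideal.span (Set.range f) →ₗ[MvPolynomial σ k] MvPolynomial σ k ⧸ Ideal.span (Set.range f)}
    {H : ι → MvPolynomial σ k} (hH : ∀ i, (H i).IsHomogeneous (d i))
    (hφ : ∀ i, φ (Ideal.generator f i) = Ideal.Quotient.mk _ (H i)) :
    φ ∈ degreeZeroHoms k σ (Ideal.span (Set.range f)) := by
  classical
  intro m p hp hpm
  obtain ⟨a, rfl⟩ := Ideal.mem_span_range_iff_exists_fun.1 hp
  set b : ι → MvPolynomial σ k := fun i =>
    if d i ≤ m then homogeneousComponent (m - d i) (a i) else 0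
  have hab : ∑ i, a i * f i = ∑ i, b i * f i := by
    rw [← homogeneousComponent_eq_self hpm, map_sum]
    refine Finset.sum_congr rfl fun i _ => ?_
    rw [homogeneousComponent_mul_of_isHomogeneous_s8 (hf i)]
    split_ifs <;> simp [b, *]
  have hb : ∀ i, b i * H i ∈ homogeneousSubmodule σ k m := by
    intro i
    by_cases hi : d i ≤ m
    · simpa [b, hi, Nat.sub_add_cancel hi] using
        (homogeneousComponent_isHomogeneous (m - d i) (a i)).mul (hH i)
    · simp [b, hi]
  simp_rw [hab, Ideal.mk_sum_mul_eq_sum_smul_generator, map_sum, map_smul, hφ]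
  exact Submodule.sum_mem _ fun i _ => ⟨_, hb i, by simp [Ideal.Quotient.smul_mk]⟩

namespace TypeIV

variable {k σ : Type*} [Field k] {x y z : σ}

variable (k x y z) in
noncomputable def gens : Fin 4 → MvPolynomial σ k := ![X x ^ 2, X x * X y, X y ^ 2, X x * X z]

variable (k x y z) in
noncomputable abbrev ideal : Ideal (MvPolynomial σ k) := Ideal.span (Set.range (gens k x y z))

lemma ideal_eq_span : ideal k x y z = Ideal.span {X x ^ 2, X x * X y, X y ^ 2, X x * X z} := by
  rw [ideal]
  congr 1
  ext p
  simp only [gens, Matrix.range_cons, Matrix.range_empty, Set.union_empty, Set.union_singleton,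
    Set.union_insert, Set.mem_insert_iff, Set.mem_singleton_iff]
  tauto

lemma isHomogeneous_gens (i : Fin 4) : (gens k x y z i).IsHomogeneous 2 := by
  fin_cases i
  · exact isHomogeneous_X_pow x 2
  · exact (isHomogeneous_X k x).mul (isHomogeneous_X k y)
  · exact isHomogeneous_X_pow y 2
  · exact (isHomogeneous_X k x).mul (isHomogeneous_X k z)

variable (x y z) in
/-- Exponents of the monomials outside `ideal`. -/
def IsStandard (N : σ →₀ ℕ) : Prop := N x = 0 ∧ N y ≤ 1 ∨ N x = 1 ∧ N y = 0 ∧ N z = 0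

lemma mem_ideal_iff (hxy : x ≠ y) (hxz : x ≠ z) {p : MvPolynomial σ k} :
    p ∈ ideal k x y z ↔ ∀ N, IsStandard x y z N → coeff N p = 0 := by
  have hgens : Set.range (gens k x y z) = (fun s => monomial s (1 : k)) '' Set.range
      ![Finsupp.single x 2, Finsupp.single x 1 + Finsupp.single y 1, Finsupp.single y 2,
        Finsupp.single x 1 + Finsupp.single z 1] := by
    rw [← Set.range_comp]
    congr 1
    ext i
    fin_cases i <;> simp only [gens, X_pow_eq_monomial] <;> simp [X, monomial_mul]
  rw [ideal, hgens, mem_ideal_span_monomial_image]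
  simp only [mem_support_iff, Matrix.range_cons, Matrix.range_empty, Set.union_empty,
    Set.union_singleton, Set.union_insert, Set.mem_insert_iff, Set.mem_singleton_iff,
    exists_eq_or_imp, exists_eq_left, Finsupp.single_le_iff, Finsupp.single_add_single_le_iff hxy,
    Finsupp.single_add_single_le_iff hxz, IsStandard]
  refine forall_congr' fun N => ⟨fun h hN => ?_, fun h hN => ?_⟩
  · by_contra hc
    have := h hc
    omega
  · by_contra hc
    exact hN (h (by omega))

lemma coeff_eq_of_sub_mem (hxy : x ≠ y) (hxz : x ≠ z) {p q : MvPolynomial σ k}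
    (h : p - q ∈ ideal k x y z) {N : σ →₀ ℕ} (hN : IsStandard x y z N) : coeff N p = coeff N q :=
  sub_eq_zero.1 (by rw [← coeff_sub]; exact (mem_ideal_iff hxy hxz).1 h N hN)

lemma exists_syzygy (hxy : x ≠ y) (hxz : x ≠ z) (hyz : y ≠ z) {a : Fin 4 → MvPolynomial σ k}
    (h : ∑ i, a i * gens k x y z i = 0) :
    ∃ w c u v : MvPolynomial σ k,
      a 0 = -(X y * w) - X z * u ∧ a 1 = X x * w - X y * c - X z * v ∧
      a 2 = X x * c ∧ a 3 = X x * u + X y * v := by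
  simp only [Fin.sum_univ_four, gens, Matrix.cons_val] at h
  obtain ⟨c, hc⟩ : X x ∣ a 2 := X_dvd_of_X_dvd_mul_X_pow (n := 2) hxy
    ⟨-(a 0 * X x + a 1 * X y + a 3 * X z), by linear_combination h⟩
  have h₁ : a 0 * X x + (a 1 + c * X y) * X y + a 3 * X z = 0 :=
    (mul_eq_zero.1 (by linear_combination h - X y ^ 2 * hc : X x * _ = 0)).resolve_left
      (X_ne_zero x)
  have ha₃ : a 3 ∈ Ideal.span {X x, X y} := by
    rw [← Set.image_pair]
    refine mem_span_X_image_of_X_mul_mem (i := z) (by simp [hxz.symm, hyz.symm]) ?_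
    rw [Set.image_pair, Ideal.mem_span_pair]
    exact ⟨-a 0, -(a 1 + c * X y), by linear_combination -h₁⟩
  obtain ⟨u, v, huv⟩ := Ideal.mem_span_pair.1 ha₃
  obtain ⟨w, hw⟩ : X x ∣ a 1 + c * X y + v * X z := X_dvd_of_X_dvd_mul_X_pow (n := 1) hxy
    ⟨-(a 0 + u * X z), by linear_combination h₁ + X z * huv⟩
  have h₂ : a 0 + u * X z + w * X y = 0 :=
    (mul_eq_zero.1 (by linear_combination h₁ + X z * huv - X y * hw : X x * _ = 0)).resolve_left
      (X_ne_zero x)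
  exact ⟨w, c, u, v, by linear_combination h₂, by linear_combination hw, hc,
    by linear_combination -huv⟩

variable (x y z) in
/-- The relations imposed by the four linear syzygies `y f₀ = x f₁`, `y f₁ = x f₂`, `z f₀ = x f₃`,
`z f₁ = y f₃` of `f = gens`; by `exists_syzygy` these generate all syzygies. -/
def Compatible (H : Fin 4 → MvPolynomial σ k) : Prop :=
  X y * H 0 - X x * H 1 ∈ ideal k x y z ∧ X y * H 1 - X x * H 2 ∈ ideal k x y z ∧
    X z * H 0 - X x * H 3 ∈ ideal k x y z ∧ X z * H 1 - X y * H 3 ∈ ideal k x y z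

lemma sum_mul_mem_of_compatible (hxy : x ≠ y) (hxz : x ≠ z) (hyz : y ≠ z)
    {H : Fin 4 → MvPolynomial σ k} (hH : Compatible x y z H) {a : Fin 4 → MvPolynomial σ k}
    (ha : ∑ i, a i * gens k x y z i = 0) : ∑ i, a i * H i ∈ ideal k x y z := by
  obtain ⟨w, c, u, v, h₀, h₁, h₂, h₃⟩ := exists_syzygy hxy hxz hyz ha
  obtain ⟨r₁, r₂, r₃, r₄⟩ := hH
  have : ∑ i, a i * H i = -(w * (X y * H 0 - X x * H 1)) - c * (X y * H 1 - X x * H 2) -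
      u * (X z * H 0 - X x * H 3) - v * (X z * H 1 - X y * H 3) := by
    rw [Fin.sum_univ_four, h₀, h₁, h₂, h₃]
    ring
  rw [this]
  exact sub_mem (sub_mem (sub_mem (neg_mem (Ideal.mul_mem_left _ _ r₁))
    (Ideal.mul_mem_left _ _ r₂)) (Ideal.mul_mem_left _ _ r₃)) (Ideal.mul_mem_left _ _ r₄)

noncomputable def homOfCompatible (hxy : x ≠ y) (hxz : x ≠ z) (hyz : y ≠ z)
    (H : Fin 4 → MvPolynomial σ k) (hH : Compatible x y z H) :
    ideal k x y z →ₗ[MvPolynomial σ k] MvPolynomial σ k ⧸ ideal k x y z :=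
  Ideal.liftOfSyzygies _ (fun i => Ideal.Quotient.mk _ (H i)) fun a ha => by
    rw [← Ideal.Quotient.eq_zero_iff_mem.2 (sum_mul_mem_of_compatible hxy hxz hyz hH ha)]
    simp [Ideal.Quotient.smul_mk]

lemma homOfCompatible_generator (hxy : x ≠ y) (hxz : x ≠ z) (hyz : y ≠ z)
    {H : Fin 4 → MvPolynomial σ k} (hH : Compatible x y z H) (i : Fin 4) :
    homOfCompatible hxy hxz hyz H hH (Ideal.generator _ i) = Ideal.Quotient.mk _ (H i) :=
  Ideal.liftOfSyzygies_generator _ _ _ i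

lemma compatible_of_generator
    {φ : ideal k x y z →ₗ[MvPolynomial σ k] MvPolynomial σ k ⧸ ideal k x y z}
    {H : Fin 4 → MvPolynomial σ k}
    (hφ : ∀ i, φ (Ideal.generator _ i) = Ideal.Quotient.mk _ (H i)) : Compatible x y z H := by
  refine ⟨Ideal.sub_mem_of_mul_eq_mul φ hφ ?_, Ideal.sub_mem_of_mul_eq_mul φ hφ ?_,
    Ideal.sub_mem_of_mul_eq_mul φ hφ ?_, Ideal.sub_mem_of_mul_eq_mul φ hφ ?_⟩ <;>
  simp only [gens, Matrix.cons_val_zero, Matrix.cons_val_one, Matrix.cons_val] <;> ring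

lemma coeff_eq_zero_of_X_mul_sub_mem (hxy : x ≠ y) (hxz : x ≠ z) {a b : σ} (hab : a ≠ b)
    {A B : MvPolynomial σ k} (hr : X a * A - X b * B ∈ ideal k x y z) {N : σ →₀ ℕ}
    (hN : IsStandard x y z (Finsupp.single a 1 + N)) (hb : N b = 0) : coeff N A = 0 := by
  have := coeff_eq_of_sub_mem hxy hxz hr hN
  rwa [coeff_X_mul, coeff_X_mul_of_apply_eq_zero (by simp [hab, hb])] at this

variable [DecidableEq σ]

lemma coeff_eq_zero_of_apply_x_eq_one (hxy : x ≠ y) (hxz : x ≠ z) {H : MvPolynomial σ k}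
    (hH : H.IsHomogeneous 2)
    (ha : ∀ j, j ≠ x → j ≠ y → j ≠ z → coeff (Finsupp.single x 1 + Finsupp.single j 1) H = 0)
    {N : σ →₀ ℕ} (hN : N x = 1 ∧ N y = 0 ∧ N z = 0) : coeff N H = 0 := by
  refine hH.coeff_eq_zero_of_forall_eq_single_add_single (c := x) (by omega) fun j hj => ?_
  subst hj
  exact ha j (by simpa [Finsupp.single_apply] using hN.1)
    (by simpa [Finsupp.single_apply, hxy] using hN.2.1)
    (by simpa [Finsupp.single_apply, hxz] using hN.2.2)

lemma coeff_eq_zero_of_apply_y_eq_one (hxy : x ≠ y) {H : MvPolynomial σ k}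
    (hH : H.IsHomogeneous 2)
    (hb : ∀ j, j ≠ x → j ≠ y → coeff (Finsupp.single y 1 + Finsupp.single j 1) H = 0)
    {N : σ →₀ ℕ} (hN : N x = 0 ∧ N y = 1) : coeff N H = 0 := by
  refine hH.coeff_eq_zero_of_forall_eq_single_add_single (c := y) (by omega) fun j hj => ?_
  subst hj
  exact hb j (by simpa [Finsupp.single_apply, hxy.symm] using hN.1)
    (by simpa [Finsupp.single_apply] using hN.2)

lemma mem_ideal_zero (hxy : x ≠ y) (hxz : x ≠ z) (hyz : y ≠ z) {H₀ H₃ : MvPolynomial σ k}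
    (h₀ : H₀.IsHomogeneous 2) (hr : X z * H₀ - X x * H₃ ∈ ideal k x y z)
    (ha : ∀ j, j ≠ x → j ≠ y → j ≠ z → coeff (Finsupp.single x 1 + Finsupp.single j 1) H₀ = 0) :
    H₀ ∈ ideal k x y z := by
  refine (mem_ideal_iff hxy hxz).2 fun N hN => ?_
  rcases hN with ⟨hx, hy⟩ | hN
  · exact coeff_eq_zero_of_X_mul_sub_mem hxy hxz hxz.symm hr
      (Or.inl (by simp [hxz, hyz, hx, hy])) hx
  · exact coeff_eq_zero_of_apply_x_eq_one hxy hxz h₀ ha hN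

lemma mem_ideal_one (hxy : x ≠ y) (hxz : x ≠ z) {H₁ H₂ : MvPolynomial σ k}
    (h₁ : H₁.IsHomogeneous 2) (hr : X y * H₁ - X x * H₂ ∈ ideal k x y z)
    (ha : ∀ j, j ≠ x → j ≠ y → j ≠ z → coeff (Finsupp.single x 1 + Finsupp.single j 1) H₁ = 0)
    (hb : ∀ j, j ≠ x → j ≠ y → coeff (Finsupp.single y 1 + Finsupp.single j 1) H₁ = 0) :
    H₁ ∈ ideal k x y z := by
  refine (mem_ideal_iff hxy hxz).2 fun N hN => ?_
  rcases hN with ⟨hx, hy⟩ | hN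
  · obtain hy | hy : N y = 0 ∨ N y = 1 := by omega
    · exact coeff_eq_zero_of_X_mul_sub_mem hxy hxz hxy.symm hr
        (Or.inl (by simp [hxy, hx, hy])) hx
    · exact coeff_eq_zero_of_apply_y_eq_one hxy h₁ hb ⟨hx, hy⟩
  · exact coeff_eq_zero_of_apply_x_eq_one hxy hxz h₁ ha hN

lemma mem_ideal_two (hxy : x ≠ y) (hxz : x ≠ z) (hyz : y ≠ z) {H₁ H₂ : MvPolynomial σ k}
    (h₂ : H₂.IsHomogeneous 2) (hr : X y * H₁ - X x * H₂ ∈ ideal k x y z)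
    (ha : ∀ j, j ≠ x → j ≠ y → j ≠ z → coeff (Finsupp.single x 1 + Finsupp.single j 1) H₂ = 0)
    (hb : ∀ j, j ≠ x → j ≠ y → coeff (Finsupp.single y 1 + Finsupp.single j 1) H₂ = 0)
    (hc : ∀ j, j ≠ x → j ≠ y → coeff (Finsupp.single z 1 + Finsupp.single j 1) H₂ = 0) :
    H₂ ∈ ideal k x y z := by
  refine (mem_ideal_iff hxy hxz).2 fun N hN => ?_
  rcases hN with ⟨hx, hy⟩ | hN
  · obtain hy | hy : N y = 0 ∨ N y = 1 := by omega
    · by_cases hz : N z = 0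
      · exact coeff_eq_zero_of_X_mul_sub_mem hxy hxz hxy (sub_mem_comm_iff.1 hr)
          (Or.inr (by simp [hxy, hxz, hx, hy, hz])) hy
      · refine h₂.coeff_eq_zero_of_forall_eq_single_add_single hz fun j hj => ?_
        subst hj
        exact hc j (by simpa [Finsupp.single_apply, hxz] using hx)
          (by simpa [Finsupp.single_apply, hyz] using hy)
    · exact coeff_eq_zero_of_apply_y_eq_one hxy h₂ hb ⟨hx, hy⟩
  · exact coeff_eq_zero_of_apply_x_eq_one hxy hxz h₂ ha hN

lemma mem_ideal_three (hxy : x ≠ y) (hxz : x ≠ z) (hyz : y ≠ z) {H₁ H₃ : MvPolynomial σ k}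
    (h₃ : H₃.IsHomogeneous 2) (hr : X z * H₁ - X y * H₃ ∈ ideal k x y z)
    (ha : ∀ j, j ≠ x → j ≠ y → j ≠ z → coeff (Finsupp.single x 1 + Finsupp.single j 1) H₃ = 0)
    (hb : ∀ j, j ≠ x → j ≠ y → coeff (Finsupp.single y 1 + Finsupp.single j 1) H₃ = 0)
    (hb₁ : ∀ j, j ≠ x → j ≠ y → coeff (Finsupp.single y 1 + Finsupp.single j 1) H₁ = 0) :
    H₃ ∈ ideal k x y z := by
  refine (mem_ideal_iff hxy hxz).2 fun N hN => ?_
  rcases hN with ⟨hx, hy⟩ | hN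
  · obtain hy | hy : N y = 0 ∨ N y = 1 := by omega
    · have hrel := coeff_eq_of_sub_mem hxy hxz hr (N := Finsupp.single y 1 + N)
        (Or.inl (by simp [hxy, hx, hy]))
      rw [coeff_X_mul] at hrel
      by_cases hz : N z = 0
      · rw [← hrel]
        exact coeff_X_mul_of_apply_eq_zero (by simp [hyz, hz]) _
      · refine h₃.coeff_eq_zero_of_forall_eq_single_add_single hz fun j hj => ?_
        subst hj
        rw [← hrel, add_left_comm, coeff_X_mul]
        exact hb₁ j (by simpa [Finsupp.single_apply, hxz] using hx)
          (by simpa [Finsupp.single_apply, hyz] using hy)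
    · exact coeff_eq_zero_of_apply_y_eq_one hxy h₃ hb ⟨hx, hy⟩
  · exact coeff_eq_zero_of_apply_x_eq_one hxy hxz h₃ ha hN

section Dimension

variable [Fintype σ]

variable (k x y z) in
abbrev Params := (Fin 4 → ({x, y, z}ᶜ : Finset σ) → k) × (Fin 4 → ({x, y}ᶜ : Finset σ) → k)

variable (x y z) in
noncomputable def quadrics : Params k x y z →ₗ[k] Fin 4 → MvPolynomial σ k where
  toFun p := ![X x * linearForm (p.1 0),
    X x * linearForm (p.1 1) + X y * linearForm (p.2 0),
    X x * linearForm (p.1 2) + X y * linearForm (p.2 1) + X z * linearForm (p.2 2),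
    X x * linearForm (p.1 3) + X y * linearForm (p.2 3) + X z * linearForm (p.2 0)]
  map_add' p q := by
    ext i : 1
    fin_cases i <;>
      simp only [Prod.fst_add, Prod.snd_add, Pi.add_apply, map_add, Fin.zero_eta, Fin.mk_one,
        Fin.reduceFinMk, Matrix.cons_val_zero, Matrix.cons_val_one, Matrix.cons_val] <;> ring
  map_smul' c p := by
    ext i : 1
    fin_cases i <;> simp [smul_add]

lemma isHomogeneous_quadrics (p : Params k x y z) (i : Fin 4) :
    (quadrics x y z p i).IsHomogeneous 2 := by
  have h : ∀ (a : σ) {s : Finset σ} (u : s → k), (X a * linearForm u).IsHomogeneous 2 :=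
    fun a _ u => (isHomogeneous_X k a).mul (isHomogeneous_linearForm u)
  fin_cases i
  · exact h _ _
  · exact (h _ _).add (h _ _)
  · exact ((h _ _).add (h _ _)).add (h _ _)
  · exact ((h _ _).add (h _ _)).add (h _ _)

lemma compatible_quadrics (p : Params k x y z) : Compatible x y z (quadrics x y z p) := by
  set α := fun i => linearForm (R := k) (p.1 i)
  set β := fun i => linearForm (R := k) (p.2 i)
  refine ⟨Ideal.mem_span_range_iff_exists_fun.2 ⟨![-α 1, α 0 - β 0, 0, 0], ?_⟩,
    Ideal.mem_span_range_iff_exists_fun.2 ⟨![-α 2, α 1 - β 1, β 0, -β 2], ?_⟩,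
    Ideal.mem_span_range_iff_exists_fun.2 ⟨![-α 3, -β 3, 0, α 0 - β 0], ?_⟩,
    Ideal.mem_span_range_iff_exists_fun.2 ⟨![0, -α 3, -β 3, α 1], ?_⟩⟩ <;>
  simp only [gens, quadrics, Fin.sum_univ_four, Matrix.cons_val_zero, Matrix.cons_val_one,
    Matrix.cons_val, LinearMap.coe_mk, AddHom.coe_mk, α, β] <;> ring

variable (x y z) in
/-- The coefficients of `x xⱼ` in all four entries and those of `y xⱼ`, `y xⱼ`, `z xⱼ`, `y xⱼ` in
`H 1`, `H 2`, `H 2`, `H 3`: the coordinates of `H` modulo `ideal` seen by `quadrics`. -/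
noncomputable def readout : (Fin 4 → MvPolynomial σ k) →ₗ[k] Params k x y z where
  toFun H := (fun i j => coeff (Finsupp.single x 1 + Finsupp.single (j : σ) 1) (H i),
    fun i j => coeff (Finsupp.single (![y, y, z, y] i) 1 + Finsupp.single (j : σ) 1)
      (H (![1, 2, 2, 3] i)))
  map_add' H H' := by ext <;> simp
  map_smul' c H := by ext <;> simp

lemma readout_quadrics (hxy : x ≠ y) (hxz : x ≠ z) (hyz : y ≠ z) (p : Params k x y z) :
    readout x y z (quadrics x y z p) = p := by
  ext i ⟨j, hj⟩
  · obtain ⟨hjx, hjy, hjz⟩ : j ≠ x ∧ j ≠ y ∧ j ≠ z := by simpa using hj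
    fin_cases i <;> simp [readout, quadrics, coeff_single_add_single_X_mul,
      coeff_single_linearForm, hxy.symm, hxz.symm, hjx, hjy, hjz, hjy.symm, hjz.symm]
  · obtain ⟨hjx, hjy⟩ : j ≠ x ∧ j ≠ y := by simpa using hj
    fin_cases i <;> simp [readout, quadrics, coeff_single_add_single_X_mul,
      coeff_single_linearForm, hxy, hxz, hyz, hjx, hjy, hxy.symm, hyz.symm, hjx.symm, hjy.symm]

lemma readout_eq_zero_of_mem (hxy : x ≠ y) (hxz : x ≠ z) (hyz : y ≠ z)
    {H : Fin 4 → MvPolynomial σ k} (hH : ∀ i, H i ∈ ideal k x y z) : readout x y z H = 0 := by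
  ext i ⟨j, hj⟩
  · obtain ⟨hjx, hjy, hjz⟩ : j ≠ x ∧ j ≠ y ∧ j ≠ z := by simpa using hj
    exact (mem_ideal_iff hxy hxz).1 (hH i) _
      (Or.inr (by simp [hxy, hxz, hjx.symm, hjy.symm, hjz.symm]))
  · obtain ⟨hjx, hjy⟩ : j ≠ x ∧ j ≠ y := by simpa using hj
    refine (mem_ideal_iff hxy hxz).1 (hH _) _ ?_
    fin_cases i <;> simp [IsStandard, hxy, hxz, hyz, hjx.symm, hjy.symm]

lemma mem_ideal_of_readout_eq_zero (hxy : x ≠ y) (hxz : x ≠ z) (hyz : y ≠ z)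
    {H : Fin 4 → MvPolynomial σ k} (hH : ∀ i, (H i).IsHomogeneous 2) (hc : Compatible x y z H)
    (hr : readout x y z H = 0) (i : Fin 4) : H i ∈ ideal k x y z := by
  obtain ⟨r₁, r₂, r₃, r₄⟩ := hc
  have ha : ∀ i j, j ≠ x → j ≠ y → j ≠ z →
      coeff (Finsupp.single x 1 + Finsupp.single j 1) (H i) = 0 := fun i j h₁ h₂ h₃ =>
    congrFun (congrFun (congrArg Prod.fst hr) i) ⟨j, by simp [h₁, h₂, h₃]⟩
  have hb : ∀ i j, j ≠ x → j ≠ y → coeff (Finsupp.single (![y, y, z, y] i) 1 +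
      Finsupp.single j 1) (H (![1, 2, 2, 3] i)) = 0 := fun i j h₁ h₂ =>
    congrFun (congrFun (congrArg Prod.snd hr) i) ⟨j, by simp [h₁, h₂]⟩
  fin_cases i
  · exact mem_ideal_zero hxy hxz hyz (hH 0) r₃ (ha 0)
  · exact mem_ideal_one hxy hxz (hH 1) r₂ (ha 1) (hb 0)
  · exact mem_ideal_two hxy hxz hyz (hH 2) r₂ (ha 2) (hb 1) (hb 2)
  · exact mem_ideal_three hxy hxz hyz (hH 3) r₄ (ha 3) (hb 3) (hb 0)

noncomputable def tangentMap (hxy : x ≠ y) (hxz : x ≠ z) (hyz : y ≠ z) :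
    Params k x y z →ₗ[k] degreeZeroHoms k σ (ideal k x y z) where
  toFun p := ⟨homOfCompatible hxy hxz hyz _ (compatible_quadrics p),
    mem_degreeZeroHoms_of_generator isHomogeneous_gens (isHomogeneous_quadrics p)
      (homOfCompatible_generator hxy hxz hyz _)⟩
  map_add' p q := Subtype.ext <| Ideal.span_range_hom_ext fun i => by
    simp [homOfCompatible_generator]
  map_smul' c p := Subtype.ext <| Ideal.span_range_hom_ext fun i => by
    rw [RingHom.id_apply, Submodule.coe_smul, LinearMap.smul_apply, homOfCompatible_generator,
      homOfCompatible_generator, map_smul, Pi.smul_apply, ← Ideal.Quotient.mkₐ_eq_mk k, map_smul]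

lemma tangentMap_generator (hxy : x ≠ y) (hxz : x ≠ z) (hyz : y ≠ z) (p : Params k x y z)
    (i : Fin 4) : (tangentMap hxy hxz hyz p).1 (Ideal.generator _ i) =
      Ideal.Quotient.mk _ (quadrics x y z p i) :=
  homOfCompatible_generator hxy hxz hyz (compatible_quadrics p) i

lemma tangentMap_injective (hxy : x ≠ y) (hxz : x ≠ z) (hyz : y ≠ z) :
    Function.Injective (tangentMap (k := k) hxy hxz hyz) := by
  refine (injective_iff_map_eq_zero _).2 fun p hp => ?_
  have hmem : ∀ i, quadrics x y z p i ∈ ideal k x y z := fun i => by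
    rw [← Ideal.Quotient.eq_zero_iff_mem, ← tangentMap_generator hxy hxz hyz, hp,
      ZeroMemClass.coe_zero, LinearMap.zero_apply]
  rw [← readout_quadrics hxy hxz hyz p, readout_eq_zero_of_mem hxy hxz hyz hmem]

lemma tangentMap_surjective (hxy : x ≠ y) (hxz : x ≠ z) (hyz : y ≠ z) :
    Function.Surjective (tangentMap (k := k) hxy hxz hyz) := by
  rintro ⟨φ, hφ⟩
  have : ∀ i, ∃ H : MvPolynomial σ k, H.IsHomogeneous 2 ∧
      φ (Ideal.generator _ i) = Ideal.Quotient.mk _ H := fun i => by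
    obtain ⟨H, hH, h⟩ := hφ 2 _ (Ideal.generator _ i).2 (isHomogeneous_gens i)
    exact ⟨H, hH, h.symm⟩
  choose H hH hφH using this
  set p := readout x y z H
  set D := H - quadrics x y z p
  have hD : ∀ i, (φ - (tangentMap hxy hxz hyz p).1) (Ideal.generator _ i) =
      Ideal.Quotient.mk _ (D i) := fun i => by
    simp [D, hφH, tangentMap_generator]
  have hDmem := mem_ideal_of_readout_eq_zero (H := D) hxy hxz hyz
    (fun i => (hH i).sub (isHomogeneous_quadrics p i)) (compatible_of_generator hD)
    (by rw [map_sub, readout_quadrics hxy hxz hyz, sub_self])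
  refine ⟨p, Subtype.ext (Eq.symm (sub_eq_zero.1 (Ideal.span_range_hom_ext fun i => ?_)))⟩
  rw [hD, LinearMap.zero_apply, Ideal.Quotient.eq_zero_iff_mem]
  exact hDmem i

lemma finrank_params (hxy : x ≠ y) (hxz : x ≠ z) (hyz : y ≠ z) :
    Module.finrank k (Params k x y z) = 4 * (Fintype.card σ - 3) + 4 * (Fintype.card σ - 2) := by
  simp only [Module.finrank_prod, Module.finrank_pi_fintype, Module.finrank_self, Fintype.card_coe,
    Finset.card_compl, Finset.sum_const, Finset.card_univ, Fintype.card_fin, smul_eq_mul,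
    mul_one]
  rw [Finset.card_eq_three.2 ⟨x, y, z, hxy, hxz, hyz, rfl⟩, Finset.card_pair hxy]

theorem finrank_degreeZeroHoms (hxy : x ≠ y) (hxz : x ≠ z) (hyz : y ≠ z) :
    Module.finrank k (degreeZeroHoms k σ (ideal k x y z)) =
      4 * (Fintype.card σ - 3) + 4 * (Fintype.card σ - 2) :=
  (LinearEquiv.ofBijective (tangentMap hxy hxz hyz)
    ⟨tangentMap_injective hxy hxz hyz, tangentMap_surjective hxy hxz hyz⟩).finrank_eq.symm.trans
    (finrank_params hxy hxz hyz)

end Dimension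

end TypeIV

/-- for `I = (x₀², x₀x₁, x₁², x₀x₂)` in `S = k[x₀,…,xₙ]`, `n ≥ 3`,
`char k = 0`, the degree-zero graded piece of `Hom_S(I/I², S/I)` has `k`-dimension
`8n - 12`. -/
theorem stmt_8 (k : Type*) [Field k] (n : ℕ) (hn : 3 ≤ n)
    (I : Ideal (MvPolynomial (Fin (n + 1)) k))
    (hI : I = Ideal.span {X (⟨0, by omega⟩ : Fin (n + 1)) ^ 2,
        X (⟨0, by omega⟩ : Fin (n + 1)) * X ⟨1, by omega⟩,
        X (⟨1, by omega⟩ : Fin (n + 1)) ^ 2,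
        X (⟨0, by omega⟩ : Fin (n + 1)) * X ⟨2, by omega⟩}) :
    Module.finrank k (degreeZeroHoms k (Fin (n + 1)) I) = 8 * n - 12 := by
  rw [hI, ← TypeIV.ideal_eq_span, TypeIV.finrank_degreeZeroHoms (by simp) (by simp) (by simp),
    Fintype.card_fin]
  omega
end
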